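/- For every α ∈ (0, 1/2) and a ∈ ℝ there exists a positive constant C_α (independent of n and x) such that |Λ_n^{-1}(x) − Λ^{-1}(x)| ≤ C_α/n for every x ∈ ℝ and every positive integer n, where Λ^{-1} and Λ_n^{-1} denote the inverse functions of Λ and Λ_n respectively. -/

import Mathlib

/-- `σ(x) = 1/α` if `x ≥ 0`, `σ(x) = 1/(1-α)` if `x < 0`. -/
noncomputable def sigma0 (α : ℝ) (x : ℝ) : ℝ := if 0 ≤ x then 1 / α else 1 / (1 - α)

/-- The continuous approximation `σ_n`. -/
noncomputable def sigmaN (α : ℝ) (n : ℕ) (x : ℝ) : ℝ :=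
  if x ∈ Set.Ioo (-(1 / (n : ℝ))) 0 then 1 / α + n * ((1 - 2 * α) / (α * (1 - α))) * x
  else sigma0 α x

/-- `Λ(x) = ∫_a^x ds / σ(s)`. -/
noncomputable def Lambda (α : ℝ) (a : ℝ) (x : ℝ) : ℝ :=
  ∫ s in a..x, 1 / sigma0 α s

/-- `Λ_n(x) = ∫_a^x ds / σ_n(s)`. -/
noncomputable def LambdaN (α : ℝ) (a : ℝ) (n : ℕ) (x : ℝ) : ℝ :=
  ∫ s in a..x, 1 / sigmaN α n s

open MeasureTheory intervalIntegral Set Filter Function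

lemma one_div_sigma0_eq (α s : ℝ) : 1 / sigma0 α s = if 0 ≤ s then α else 1 - α := by
  unfold sigma0; split <;> simp [one_div_one_div]

lemma bound_f {α : ℝ} (hα0 : 0 < α) (hα2 : α < 1/2) (s : ℝ) :
    α ≤ 1 / sigma0 α s ∧ 1 / sigma0 α s ≤ 1 - α := by
  rw [one_div_sigma0_eq]; split <;> constructor <;> linarith

lemma bound_g {α : ℝ} (hα0 : 0 < α) (hα2 : α < 1/2) {n : ℕ} (hn : 0 < n) (s : ℝ) :
    α ≤ 1 / sigmaN α n s ∧ 1 / sigmaN α n s ≤ 1 - α := by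
  unfold sigmaN
  split
  · rename_i hs
    obtain ⟨hs1, hs2⟩ := hs
    have hn' : (0:ℝ) < n := by exact_mod_cast hn
    have hα1 : 0 < 1 - α := by linarith
    have hk : 0 ≤ (1 - 2*α) / (α * (1 - α)) := by
      apply div_nonneg (by linarith) (by positivity)
    have h1 : -1 ≤ (n:ℝ) * s := by
      have := mul_lt_mul_of_pos_left hs1 hn'
      have hne : (n:ℝ) ≠ 0 := hn'.ne'
      have : (n:ℝ) * (-(1/(n:ℝ))) = -1 := by field_simp
      nlinarith [mul_lt_mul_of_pos_left hs1 hn']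
    set k := (1 - 2*α) / (α * (1 - α)) with hkdef
    have hupper : 1 / α + (n:ℝ) * k * s ≤ 1 / α := by
      have : (n:ℝ) * k * s ≤ 0 := by
        apply mul_nonpos_of_nonneg_of_nonpos (by positivity) hs2.le
      linarith
    have hlower : 1 / (1 - α) ≤ 1 / α + (n:ℝ) * k * s := by
      have h2 : k * (-1) ≤ k * ((n:ℝ) * s) := mul_le_mul_of_nonneg_left h1 hk
      have key : 1/α - k = 1/(1-α) := by
        rw [hkdef, div_sub_div _ _ hα0.ne' (by positivity : α * (1-α) ≠ 0),
          div_eq_div_iff (by positivity) hα1.ne']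
        ring
      nlinarith
    have ht0 : 0 < 1 / α + (n:ℝ) * k * s := lt_of_lt_of_le (by positivity) hlower
    constructor
    · have := one_div_le_one_div_of_le ht0 hupper
      rwa [one_div_one_div] at this
    · have := one_div_le_one_div_of_le (by positivity) hlower
      rwa [one_div_one_div] at this
  · exact bound_f hα0 hα2 s

lemma meas_f {α : ℝ} : Measurable (fun s => 1 / sigma0 α s) := by
  apply measurable_const.div
  unfold sigma0
  exact Measurable.ite (measurableSet_le measurable_const measurable_id) measurable_const measurable_const

lemma meas_g {α : ℝ} {n : ℕ} : Measurable (fun s => 1 / sigmaN α n s) := by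
  apply measurable_const.div
  unfold sigmaN
  apply Measurable.ite measurableSet_Ioo
  · exact (measurable_const.mul measurable_id).const_add _
  · unfold sigma0
    exact Measurable.ite (measurableSet_le measurable_const measurable_id) measurable_const measurable_const

lemma intInt {h : ℝ → ℝ} {C : ℝ} (hm : Measurable h) (hb : ∀ s, |h s| ≤ C) (x y : ℝ) :
    IntervalIntegrable h volume x y := by
  rw [intervalIntegrable_iff]
  apply MeasureTheory.Integrable.mono' ((integrableOn_const_iff (C := C) enorm_ne_top).2 (Or.inr ?_))
  · exact hm.aestronglyMeasurable
  · filter_upwards with s using by simpa [Real.norm_eq_abs] using hb s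
  · rw [Set.uIoc]; exact measure_Ioc_lt_top

lemma abs_le_of_bounds {α : ℝ} {h : ℝ → ℝ} (hα0 : 0 < α)
    (hb : ∀ s, α ≤ h s ∧ h s ≤ 1 - α) (s : ℝ) : |h s| ≤ 1 := by
  have := hb s; rw [abs_le]; constructor <;> nlinarith [this.1, this.2]

lemma F_sub {h : ℝ → ℝ} (hi : ∀ x y : ℝ, IntervalIntegrable h volume x y) (a x y : ℝ) :
    (∫ s in a..y, h s) - (∫ s in a..x, h s) = ∫ s in x..y, h s := by
  rw [← intervalIntegral.integral_add_adjacent_intervals (hi a x) (hi x y)]; ring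

lemma F_lb {α : ℝ} {h : ℝ → ℝ} (hb : ∀ s, α ≤ h s ∧ h s ≤ 1 - α)
    (hi : ∀ x y : ℝ, IntervalIntegrable h volume x y) {x y : ℝ} (hxy : x ≤ y) :
    α * (y - x) ≤ ∫ s in x..y, h s := by
  calc α * (y - x) = ∫ _ in x..y, α := by rw [intervalIntegral.integral_const, smul_eq_mul]; ring
    _ ≤ ∫ s in x..y, h s :=
      intervalIntegral.integral_mono_on hxy intervalIntegrable_const (hi x y)
        (fun s _ => (hb s).1)

lemma F_good {α : ℝ} (hα0 : 0 < α) {h : ℝ → ℝ} (hm : Measurable h)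
    (hb : ∀ s, α ≤ h s ∧ h s ≤ 1 - α) (a : ℝ) :
    Surjective (fun x => ∫ s in a..x, h s) ∧
    ∀ x y : ℝ, α * |x - y| ≤ |(∫ s in a..x, h s) - (∫ s in a..y, h s)| := by
  have hα1 : 0 < 1 - α := lt_of_lt_of_le hα0 (by nlinarith [(hb 0).1, (hb 0).2])
  have hi : ∀ x y : ℝ, IntervalIntegrable h volume x y :=
    intInt hm (abs_le_of_bounds hα0 hb)
  set F := fun x => ∫ s in a..x, h s with hF
  have habs : ∀ x y : ℝ, α * |x - y| ≤ |F x - F y| := by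
    intro x y
    rcases le_total y x with hc | hc
    · have h1 : F x - F y = ∫ s in y..x, h s := F_sub hi a y x
      have h2 := F_lb hb hi hc
      rw [h1, abs_of_nonneg (by linarith [sub_nonneg.2 hc] : (0:ℝ) ≤ x - y),
        abs_of_nonneg (by nlinarith [sub_nonneg.2 hc] : (0:ℝ) ≤ ∫ s in y..x, h s)]
      linarith
    · have h1 : F y - F x = ∫ s in x..y, h s := F_sub hi a x y
      have h2 := F_lb hb hi hc
      rw [abs_sub_comm x y, abs_sub_comm (F x) (F y), h1,
        abs_of_nonneg (by linarith [sub_nonneg.2 hc] : (0:ℝ) ≤ y - x),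
        abs_of_nonneg (by nlinarith [sub_nonneg.2 hc] : (0:ℝ) ≤ ∫ s in x..y, h s)]
      linarith
  refine ⟨?_, habs⟩
  have hcont : Continuous F := intervalIntegral.continuous_primitive (fun x y => hi x y) a
  apply hcont.surjective
  · apply tendsto_atTop_mono' _ (_ : ∀ᶠ x in atTop, F a + α * (x - a) ≤ F x)
    · have h1 : Tendsto (fun x : ℝ => α * (x - a)) atTop atTop := by
        apply Tendsto.const_mul_atTop hα0
        exact tendsto_atTop_add_const_right _ (-a) tendsto_id
      exact tendsto_atTop_add_const_left _ (F a) h1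
    · filter_upwards [eventually_ge_atTop a] with x hx
      have := F_lb hb hi hx
      have h1 : F x - F a = ∫ s in a..x, h s := F_sub hi a a x
      linarith
  · apply tendsto_atBot_mono' _ (_ : ∀ᶠ x in atBot, F x ≤ F a + α * (x - a))
    · have h1 : Tendsto (fun x : ℝ => α * (x - a)) atBot atBot := by
        apply Tendsto.const_mul_atBot hα0
        exact tendsto_atBot_add_const_right _ (-a) tendsto_id
      exact tendsto_atBot_add_const_left _ (F a) h1
    · filter_upwards [eventually_le_atBot a] with x hx
      have := F_lb hb hi hx
      have h1 : F a - F x = ∫ s in x..a, h s := F_sub hi a x a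
      linarith

lemma diff_bound {α : ℝ} (hα0 : 0 < α) (hα2 : α < 1/2) {n : ℕ} (hn : 0 < n) (s : ℝ) :
    |1 / sigma0 α s - 1 / sigmaN α n s| ≤
      Set.indicator (Set.Ioo (-(1 / (n : ℝ))) 0) (fun _ => (1:ℝ)) s := by
  by_cases hs : s ∈ Set.Ioo (-(1 / (n : ℝ))) 0
  · rw [Set.indicator_of_mem hs]
    have b1 := bound_f hα0 hα2 s
    have b2 := bound_g hα0 hα2 hn s
    rw [abs_le]; constructor <;> linarith [b1.1, b1.2, b2.1, b2.2]
  · rw [Set.indicator_of_notMem hs]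
    have : sigmaN α n s = sigma0 α s := if_neg hs
    simp [this]

theorem LambdaN_inv_approx_Lambda_inv (α : ℝ) (hα : α ∈ Set.Ioo (0 : ℝ) (1 / 2)) (a : ℝ) :
    ∃ C : ℝ, 0 < C ∧ ∀ (x : ℝ) (n : ℕ), 0 < n →
      |Function.invFun (LambdaN α a n) x - Function.invFun (Lambda α a) x| ≤ C / n := by
  obtain ⟨hα0, hα2⟩ := hα
  have hα1 : (0:ℝ) < 1 - α := by linarith
  refine ⟨1/α, by positivity, fun x n hn => ?_⟩
  have hn' : (0:ℝ) < n := by exact_mod_cast hn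
  have hbf := bound_f hα0 hα2
  have hbg := bound_g hα0 hα2 hn
  have hif : ∀ u v : ℝ, IntervalIntegrable (fun s => 1 / sigma0 α s) volume u v :=
    intInt meas_f (abs_le_of_bounds hα0 hbf)
  have hig : ∀ u v : ℝ, IntervalIntegrable (fun s => 1 / sigmaN α n s) volume u v :=
    intInt meas_g (abs_le_of_bounds hα0 hbg)
  obtain ⟨hFs, hFa⟩ := F_good hα0 meas_f hbf a
  obtain ⟨hGs, _⟩ := F_good hα0 meas_g hbg a
  have hFs' : Surjective (Lambda α a) := hFs
  have hGs' : Surjective (LambdaN α a n) := hGs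
  set y := Function.invFun (LambdaN α a n) x with hy
  set z := Function.invFun (Lambda α a) x with hz
  have hGy : LambdaN α a n y = x := Function.rightInverse_invFun hGs' x
  have hFz : Lambda α a z = x := Function.rightInverse_invFun hFs' x
  -- |Λ y - Λ_n y| ≤ 1/n
  have key : |Lambda α a y - LambdaN α a n y| ≤ 1 / n := by
    have hsub : Lambda α a y - LambdaN α a n y
        = ∫ s in a..y, (1 / sigma0 α s - 1 / sigmaN α n s) := by
      rw [intervalIntegral.integral_sub (hif a y) (hig a y)]; rfl
    rw [hsub]
    have h1 : |∫ s in a..y, (1 / sigma0 α s - 1 / sigmaN α n s)|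
        ≤ ∫ s in Set.uIoc a y, |1 / sigma0 α s - 1 / sigmaN α n s| := by
      simpa [Real.norm_eq_abs] using
        intervalIntegral.norm_integral_le_integral_norm_uIoc
          (f := fun s => 1 / sigma0 α s - 1 / sigmaN α n s) (a := a) (b := y) (μ := volume)
    have hind1 : ∀ s : ℝ,
        Set.indicator (Set.Ioo (-(1 / (n : ℝ))) 0) (fun _ => (1:ℝ)) s ≤ 1 := by
      intro s; unfold Set.indicator; split <;> norm_num
    have hind0 : ∀ s : ℝ,
        0 ≤ Set.indicator (Set.Ioo (-(1 / (n : ℝ))) 0) (fun _ => (1:ℝ)) s := by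
      intro s; unfold Set.indicator; split <;> norm_num
    have hintD : IntegrableOn (fun s => |1 / sigma0 α s - 1 / sigmaN α n s|)
        (Set.uIoc a y) volume := by
      rw [← intervalIntegrable_iff]
      refine intInt (C := 1) (meas_f.sub meas_g).abs (fun s => ?_) a y
      rw [abs_abs]
      exact (diff_bound hα0 hα2 hn s).trans (hind1 s)
    have hintI : IntegrableOn (Set.indicator (Set.Ioo (-(1 / (n : ℝ))) 0) (fun _ => (1:ℝ)))
        (Set.uIoc a y) volume := by
      rw [← intervalIntegrable_iff]
      refine intInt (C := 1) (measurable_one.indicator measurableSet_Ioo) (fun s => ?_) a y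
      exact abs_le.2 ⟨le_trans (by norm_num : (-1:ℝ) ≤ 0) (hind0 s), hind1 s⟩
    have h2 : ∫ s in Set.uIoc a y, |1 / sigma0 α s - 1 / sigmaN α n s|
        ≤ ∫ s in Set.uIoc a y,
            Set.indicator (Set.Ioo (-(1 / (n : ℝ))) 0) (fun _ => (1:ℝ)) s :=
      setIntegral_mono hintD hintI (fun s => diff_bound hα0 hα2 hn s)
    have h3 : ∫ s in Set.uIoc a y,
        Set.indicator (Set.Ioo (-(1 / (n : ℝ))) 0) (fun _ => (1:ℝ)) s
        = (volume (Set.uIoc a y ∩ Set.Ioo (-(1 / (n : ℝ))) 0)).toReal := by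
      rw [MeasureTheory.setIntegral_indicator measurableSet_Ioo,
        MeasureTheory.setIntegral_const, smul_eq_mul, mul_one]
      rfl
    have h4 : (volume (Set.uIoc a y ∩ Set.Ioo (-(1 / (n : ℝ))) 0)).toReal ≤ 1 / n := by
      have hm : volume (Set.uIoc a y ∩ Set.Ioo (-(1 / (n : ℝ))) 0)
          ≤ volume (Set.Ioo (-(1 / (n : ℝ))) 0) := measure_mono Set.inter_subset_right
      have hv : (volume (Set.Ioo (-(1 / (n : ℝ))) 0)).toReal = 1 / n := by
        have he : (0:ℝ) - -(1 / (n:ℝ)) = 1 / n := by ring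
        rw [Real.volume_Ioo, he, ENNReal.toReal_ofReal (by positivity)]
      calc (volume (Set.uIoc a y ∩ Set.Ioo (-(1 / (n : ℝ))) 0)).toReal
          ≤ (volume (Set.Ioo (-(1 / (n : ℝ))) 0)).toReal :=
            ENNReal.toReal_mono (by rw [Real.volume_Ioo]; exact ENNReal.ofReal_ne_top) hm
        _ = 1 / n := hv
    linarith
  -- conclude
  have habs : α * |y - z| ≤ |Lambda α a y - Lambda α a z| := hFa y z
  rw [hFz, ← hGy] at habs
  have h5 : α * |y - z| ≤ 1 / n := le_trans habs key
  rw [div_div, le_div_iff₀ (by positivity)]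
  calc |y - z| * (α * n) = (α * |y - z|) * n := by ring
    _ ≤ (1 / n) * n := mul_le_mul_of_nonneg_right h5 hn'.le
    _ = 1 := by field_simp
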